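/- arXiv:2505.01268 — 2 statements merged into one kernel-verified Lean document; each statement's English description precedes it below -/
import Mathlib

section
/- The free group F_2 on two generators, equipped with the word metric associated with a free basis, has the (1,0)-DTUT property. -/
open Metric Set Function

namespace APC

variable {X Y : Type*}

/-- A family `𝒰` of subsets of a metric space is `r`-disjoint if any two distinct members
are at distance at least `r`. -/
def RDisjoint [MetricSpace X] (r : ℝ) (𝒰 : Set (Set X)) : Prop :=
  ∀ U ∈ 𝒰, ∀ V ∈ 𝒰, U ≠ V → ∀ x ∈ U, ∀ y ∈ V, r ≤ dist x y

/-- A family `𝒰` is `R`-bounded if every member has diameter at most `R`. -/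
def RBounded [MetricSpace X] (R : ℝ) (𝒰 : Set (Set X)) : Prop :=
  ∀ U ∈ 𝒰, ∀ x ∈ U, ∀ y ∈ U, dist x y ≤ R

/-- A family is uniformly bounded if it is `R`-bounded for some `R > 0`. -/
def UnifBounded [MetricSpace X] (𝒰 : Set (Set X)) : Prop :=
  ∃ R : ℝ, 0 < R ∧ RBounded R 𝒰

/-- `asdim X ≤ n`. -/
def AsdimLE (X : Type*) [MetricSpace X] (n : ℕ) : Prop :=
  ∀ r : ℝ, 0 < r → ∃ 𝒰 : Fin (n + 1) → Set (Set X),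
    (∀ i, UnifBounded (𝒰 i)) ∧ (∀ i, RDisjoint r (𝒰 i)) ∧ (⋃ i, ⋃₀ 𝒰 i) = Set.univ

/-- `X` has finite asymptotic dimension. -/
def HasFiniteAsdim (X : Type*) [MetricSpace X] : Prop := ∃ n : ℕ, AsdimLE X n

/-- Asymptotic property C. -/
def HasAPC (X : Type*) [MetricSpace X] : Prop :=
  ∀ R : ℕ → ℝ, (∀ i, 0 < R i) → StrictMono R →
    ∃ n : ℕ, ∃ 𝒰 : Fin (n + 1) → Set (Set X),
      (∀ i, UnifBounded (𝒰 i)) ∧ (∀ i : Fin (n + 1), RDisjoint (R i) (𝒰 i)) ∧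
      (⋃ i, ⋃₀ 𝒰 i) = Set.univ

/-- `M^a`, the derivative of a collection of finite nonempty subsets of `ℕ`. -/
def deriv (M : Set (Finset ℕ)) (a : ℕ) : Set (Finset ℕ) :=
  {τ | τ.Nonempty ∧ a ∉ τ ∧ insert a τ ∈ M}

/-- `OrdLE α M` means `Ord M ≤ α` in the sense of Radul: either `M = ∅`
(so that `Ord M = 0`), or `Ord M^a < α` for every `a : ℕ`.  Defined by
well-founded recursion on the ordinal `α`. -/
def OrdLE : Ordinal.{0} → Set (Finset ℕ) → Prop :=
  Ordinal.lt_wf.fix (C := fun _ => Set (Finset ℕ) → Prop)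
    (fun α IH M => M = ∅ ∨ ∀ a : ℕ, ∃ β : Ordinal.{0}, ∃ hβ : β < α, IH β hβ (deriv M a))

/-- The collection `A(X,d)` of finite nonempty subsets `σ ⊆ ℕ` such that there is no
covering of `X` by uniformly bounded families `𝒰ᵢ` (`i ∈ σ`), each `i`-disjoint. -/
def AClass (X : Type*) [MetricSpace X] : Set (Finset ℕ) :=
  {σ | σ.Nonempty ∧ ¬ ∃ 𝒰 : ℕ → Set (Set X),
      (∀ i ∈ σ, UnifBounded (𝒰 i)) ∧ (∀ i ∈ σ, RDisjoint (i : ℝ) (𝒰 i)) ∧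
      (⋃ i ∈ σ, ⋃₀ 𝒰 i) = Set.univ}

/-- `trasdim X ≤ α`. -/
def TrasdimLE (X : Type*) [MetricSpace X] (α : Ordinal.{0}) : Prop :=
  OrdLE α (AClass X)

/-- The `(m,n)`-DTUT property: disjointness of the `(m,n)`-tiling through uniform
translation. -/
def DTUT (X : Type*) [MetricSpace X] (m n : ℕ) : Prop :=
  ∃ F : Fin m → ℕ,
    ∀ h : ℕ+ → ℕ+, ∀ k : Fin (m + 1) → ℕ+, StrictMono k →
      ∃ C : (Fin m → ℕ+) → Fin (n + 1) → Set (Set X),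
      ∃ D : (Fin m → ℕ+) → (i : Fin m) → Fin (F i + 1) → Set (Set X),
        ∀ l : Fin m → ℕ+, (∀ r : Fin m, l r ≤ h (k r.succ)) →
          ((∀ j, UnifBounded (C l j)) ∧
           (∀ i s, UnifBounded (D l i s)) ∧
           (∀ j, RDisjoint ((k 0 : ℕ) : ℝ) (C l j)) ∧
           (∀ (i : Fin m) (s : Fin (F i + 1)), RDisjoint ((k i.succ : ℕ) : ℝ) (D l i s)) ∧
           ((⋃ j, ⋃₀ C l j) ∪ (⋃ i, ⋃ s, ⋃₀ D l i s) = Set.univ)) ∧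
          (∀ (i : Fin m) (s : Fin (F i + 1)),
            (∀ t : ℕ+, t ≤ h (k i.succ) →
              (⋃₀ D (Function.update l i t) i s).Nonempty) ∧
            (∀ t t' : ℕ+, t ≤ h (k i.succ) → t' ≤ h (k i.succ) → t ≠ t' →
              Disjoint (⋃₀ D (Function.update l i t) i s)
                (⋃₀ D (Function.update l i t') i s)) ∧
            RDisjoint ((k i.succ : ℕ) : ℝ)
              (⋃ t ∈ {t : ℕ+ | t ≤ h (k i.succ)}, D (Function.update l i t) i s))

/-- The word length of `g` with respect to the symmetrized generating set `S ∪ S⁻¹`. -/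
noncomputable def wordLength {G : Type*} [Group G] (S : Set G) (g : G) : ℕ :=
  sInf {n : ℕ | ∃ L : List G, (∀ x ∈ L, x ∈ S ∨ x⁻¹ ∈ S) ∧ L.prod = g ∧ L.length = n}

/-- A group is FC if every conjugacy class is finite. -/
def IsFCGroup (G : Type*) [Group G] : Prop :=
  ∀ x : G, Set.Finite {y : G | ∃ g : G, g * x * g⁻¹ = y}

/-- A metric on a countable discrete space is proper if every ball is finite. -/
def ProperMet (X : Type*) [MetricSpace X] : Prop :=
  ∀ (x : X) (R : ℝ), (Metric.closedBall x R).Finite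

/-- Left invariance of a metric on a group. -/
def LeftInvariant (G : Type*) [Group G] [MetricSpace G] : Prop :=
  ∀ g x y : G, dist (g * x) (g * y) = dist x y

/-- Bornologous maps. -/
def Bornologous [MetricSpace X] [MetricSpace Y] (f : X → Y) : Prop :=
  ∀ R : ℝ, 0 < R → ∃ P : ℝ, 0 < P ∧ ∀ x y : X, dist x y < R → dist (f x) (f y) < P

/-- Coarse embeddings. -/
def CoarseEmbedding [MetricSpace X] [MetricSpace Y] (f : X → Y) : Prop :=
  ∃ ρminus ρplus : ℝ → ℝ, Monotone ρminus ∧ Monotone ρplus ∧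
    Filter.Tendsto ρminus Filter.atTop Filter.atTop ∧
    (∀ x y : X, ρminus (dist x y) ≤ dist (f x) (f y) ∧ dist (f x) (f y) ≤ ρplus (dist x y))

/-- Coarse equivalences: coarse embeddings with coarsely dense image. -/
def CoarseEquiv [MetricSpace X] [MetricSpace Y] (f : X → Y) : Prop :=
  CoarseEmbedding f ∧ ∃ C : ℝ, 0 < C ∧ ∀ y : Y, ∃ x : X, dist y (f x) ≤ C

end APC

open APC Set

/-!
The Cayley graph of a free group is a tree: if the reduced words of `x` and `y` first differ at
position `i`, then `|x⁻¹y| = (|x| - i) + (|y| - i)`. Hence the elements whose length lies in a band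
`[B, B + w)` and whose reduced words share a fixed prefix of length `B - r` form a set of diameter
at most `2 (w + r)`, and two such sets with different prefixes are more than `2 r` apart, while
sets in bands at distance `≥ r` are `r` apart because `| |x| - |y| | ≤ |x⁻¹y|`.

With `b = k₁` and `H = h(k₁)`, cut the lengths into blocks `[q b, (q + 1) b)`. The `t`-th translate
`𝒟^t` uses the blocks with `q ≡ 2t - 1 (mod 2H)`, cut by prefixes of length `q b - b`; all of these
are odd blocks, which are pairwise `b` apart, so `⋃ₜ 𝒟^t` is still `k₁`-disjoint. The family `𝒞`
uses the runs of blocks between consecutive blocks of `𝒟^l` (so distinct runs are a whole block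
apart), cut by prefixes of length `k₀` less than the bottom of the run.
-/

/-- The bands are the fibres of `bot` on `S`. -/
structure IsBandPartition (S : Set ℕ) (bot : ℕ → ℕ) (w r : ℕ) : Prop where
  bot_le : ∀ n ∈ S, bot n ≤ n
  lt_bot_add : ∀ n ∈ S, n < bot n + w
  separated : ∀ n ∈ S, ∀ n' ∈ S, bot n ≠ bot n' → n + r ≤ n' ∨ n' + r ≤ n

namespace IsBandPartition

variable {S : Set ℕ} {bot : ℕ → ℕ} {w r : ℕ}

theorem mono (h : IsBandPartition S bot w r) {r' : ℕ} (hr : r' ≤ r) :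
    IsBandPartition S bot w r' where
  bot_le := h.bot_le
  lt_bot_add := h.lt_bot_add
  separated n hn n' hn' hne := by have := h.separated n hn n' hn' hne; omega

theorem scale (h : IsBandPartition S bot w (r + 1)) {b : ℕ} (hb : 0 < b) :
    IsBandPartition {n | n / b ∈ S} (fun n => bot (n / b) * b) (w * b) (r * b) where
  bot_le n hn := (Nat.mul_le_mul_right b (h.bot_le _ hn)).trans (Nat.div_mul_le_self n b)
  lt_bot_add n hn := by
    have h1 := Nat.lt_div_mul_add (a := n) hb
    have h2 := Nat.mul_le_mul_right b (h.lt_bot_add _ hn)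
    rw [Nat.succ_mul, add_mul] at h2
    omega
  separated n hn n' hn' hne := by
    have key : ∀ m m' : ℕ, m / b + (r + 1) ≤ m' / b → m + r * b ≤ m' := fun m m' hm => by
      have h1 := Nat.lt_div_mul_add (a := m) hb
      have h2 := (Nat.mul_le_mul_right b hm).trans (Nat.div_mul_le_self m' b)
      rw [add_mul, add_mul, one_mul] at h2
      omega
    rcases h.separated _ hn _ hn' fun heq => hne (by rw [heq]) with hlt | hlt
    exacts [.inl (key n n' hlt), .inr (key n' n hlt)]

end IsBandPartition

theorem isBandPartition_odd : IsBandPartition {q | q % 2 = 1} id 1 2 where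
  bot_le _ _ := le_rfl
  lt_bot_add q _ := q.lt_add_one
  separated q hq q' hq' hne := by
    simp only [Set.mem_ofPred_eq, id] at hq hq' hne
    omega

/-- The start of the maximal run of consecutive integers with residue `≠ c` modulo `M` that
contains `q` (the shift by `M - 1 - c` moves the excluded residue to `M - 1`). -/
def runStart (M c q : ℕ) : ℕ := (q + (M - 1 - c)) / M * M - (M - 1 - c)

theorem isBandPartition_mod_ne {M c : ℕ} (hc : c < M) :
    IsBandPartition {q | q % M ≠ c} (runStart M c) (M - 1) 2 := by
  unfold runStart
  set d := M - 1 - c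
  have hmod : ∀ q, q % M ≠ c → (q + d) % M < M - 1 := fun q hq => by
    refine lt_of_le_of_ne (Nat.le_sub_one_of_lt (Nat.mod_lt _ (by omega))) fun heq => hq ?_
    have : q + d ≡ c + d [MOD M] := by
      rw [Nat.ModEq, heq, show c + d = M - 1 by omega, Nat.mod_eq_of_lt (by omega)]
    simpa [Nat.ModEq, Nat.mod_eq_of_lt hc] using Nat.ModEq.add_right_cancel' d this
  have hsplit := fun q => Nat.div_add_mod' (q + d) M
  refine ⟨fun q _ => ?_, fun q hq => ?_, fun q hq q' hq' hne => ?_⟩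
  · have := hsplit q
    omega
  · have := hsplit q
    have := hmod q hq
    omega
  · have key : ∀ e e', e % M < M - 1 → e / M < e' / M → e + 2 ≤ e' := fun e e' he hlt => by
      have h1 := Nat.div_add_mod' e M
      have h2 := (Nat.mul_le_mul_right M hlt).trans (Nat.div_mul_le_self e' M)
      rw [Nat.succ_mul] at h2
      omega
    rcases lt_trichotomy ((q + d) / M) ((q' + d) / M) with hlt | heq | hlt
    · exact .inl (by have := key _ _ (hmod q hq) hlt; omega)
    · exact absurd (by rw [heq]) hne
    · exact .inr (by have := key _ _ (hmod q' hq') hlt; omega)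

namespace FreeGroup

variable {α : Type*} [DecidableEq α]

theorem norm_prod_le_length {L : List (FreeGroup α)}
    (hL : ∀ x ∈ L, x ∈ range of ∨ x⁻¹ ∈ range of) : norm L.prod ≤ L.length := by
  induction L with
  | nil => simp
  | cons x L ih =>
    have hx : norm x ≤ 1 := by
      rcases hL x List.mem_cons_self with ⟨a, rfl⟩ | ⟨a, ha⟩
      · exact (norm_of a).le
      · rw [← norm_inv_eq, ← ha, norm_of]
    grw [List.prod_cons, norm_mul_le, hx, ih fun y hy => hL y (List.mem_cons_of_mem x hy)]
    simp [add_comm]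

theorem wordLength_range_of (g : FreeGroup α) : wordLength (range of) g = norm g := by
  have hg : norm g ∈ {n | ∃ L : List (FreeGroup α), (∀ x ∈ L, x ∈ range of ∨ x⁻¹ ∈ range of) ∧
      L.prod = g ∧ L.length = n} := by
    refine ⟨g.toWord.map fun x => cond x.2 (of x.1) (of x.1)⁻¹, ?_, ?_, ?_⟩
    · simp only [List.mem_map]
      rintro _ ⟨⟨a, _ | _⟩, -, rfl⟩ <;> simp
    · rw [← lift_mk, mk_toWord, lift_of_apply]
    · rw [List.length_map, norm]
  refine le_antisymm (Nat.sInf_le hg) (le_csInf ⟨_, hg⟩ ?_)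
  rintro n ⟨L, hL, rfl, rfl⟩
  exact norm_prod_le_length hL

theorem norm_le_norm_add_norm_inv_mul (x y : FreeGroup α) : norm y ≤ norm x + norm (x⁻¹ * y) := by
  simpa using norm_mul_le x (x⁻¹ * y)

theorem norm_inv_mul_comm (x y : FreeGroup α) : norm (y⁻¹ * x) = norm (x⁻¹ * y) := by
  rw [← norm_inv_eq, mul_inv_rev, inv_inv]

theorem norm_inv_mul_le_of_take_eq {x y : FreeGroup α} {c : ℕ}
    (h : x.toWord.take c = y.toWord.take c) :
    norm (x⁻¹ * y) ≤ (norm x - c) + (norm y - c) := by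
  have hsplit (z : FreeGroup α) (hz : z.toWord.take c = x.toWord.take c) :
      z = mk (x.toWord.take c) * mk (z.toWord.drop c) := by
    rw [← hz, mul_mk, List.take_append_drop, mk_toWord]
  have hxy : x⁻¹ * y = (mk (x.toWord.drop c))⁻¹ * mk (y.toWord.drop c) := calc
    x⁻¹ * y = (mk (x.toWord.take c) * mk (x.toWord.drop c))⁻¹ *
        (mk (x.toWord.take c) * mk (y.toWord.drop c)) := by rw [← hsplit x rfl, ← hsplit y h.symm]
    _ = _ := by group
  grw [hxy, norm_mul_le, norm_inv_eq, norm_mk_le, norm_mk_le]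
  simp [norm]

theorem norm_inv_mul_of_toWord_eq_append {x y : FreeGroup α} {p u v : List (α × Bool)}
    (hx : x.toWord = p ++ u) (hy : y.toWord = p ++ v)
    (huv : ∀ a ∈ u.head?, ∀ b ∈ v.head?, a ≠ b) :
    norm (x⁻¹ * y) = u.length + v.length := by
  have hxy : x⁻¹ * y = mk (invRev u ++ v) := by
    rw [← mk_toWord (x := x), ← mk_toWord (x := y), hx, hy, ← mul_mk, ← mul_mk, ← mul_mk, ← inv_mk]
    group
  have hu : IsReduced (invRev u) := isReduced_toWord (x := x⁻¹) |>.infix <| by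
    rw [toWord_inv, hx, invRev_append]
    exact (List.prefix_append _ _).isInfix
  have hv : IsReduced v := isReduced_toWord (x := y) |>.infix <| by
    rw [hy]
    exact (List.suffix_append _ _).isInfix
  have hred : IsReduced (invRev u ++ v) := by
    refine List.isChain_append.2 ⟨hu, hv, ?_⟩
    simp only [invRev, List.getLast?_reverse, List.head?_map, Option.mem_def,
      Option.map_eq_some_iff]
    rintro _ ⟨a, ha, rfl⟩ b hb hab
    have := huv a ha b hb
    grind
  rw [norm, hxy, toWord_mk, hred.reduce_eq, List.length_append, invRev_length]

theorem le_norm_inv_mul_of_take_ne {x y : FreeGroup α} {c : ℕ}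
    (h : x.toWord.take c ≠ y.toWord.take c) :
    norm x + norm y + 2 ≤ norm (x⁻¹ * y) + 2 * c := by
  classical
  have hex : ∃ i, x.toWord.take i ≠ y.toWord.take i := ⟨c, h⟩
  obtain ⟨i, hi⟩ : ∃ i, Nat.find hex = i + 1 := Nat.exists_eq_add_one_of_ne_zero
    fun h0 => Nat.find_spec hex (by rw [h0, List.take_zero, List.take_zero])
  have hc : i + 1 ≤ c := hi ▸ Nat.find_min' hex h
  have htake : x.toWord.take i = y.toWord.take i := not_not.1 (Nat.find_min hex (by omega))
  have hnext : x.toWord[i]? ≠ y.toWord[i]? := fun hget => by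
    apply hi ▸ Nat.find_spec hex
    rw [List.take_add_one, List.take_add_one, htake, hget]
  have hnorm := norm_inv_mul_of_toWord_eq_append (List.take_append_drop i x.toWord).symm
    (htake ▸ (List.take_append_drop i y.toWord).symm) (fun a ha b hb hab => hnext <| by
      rw [List.head?_drop] at ha hb
      rw [ha, hb, hab])
  simp only [List.length_drop] at hnorm
  simp only [norm] at hnorm ⊢
  omega

def prefixPiece (S : Set ℕ) (bot : ℕ → ℕ) (r : ℕ) (x : FreeGroup α) : Set (FreeGroup α) :=
  {y | norm y ∈ S ∧ bot (norm y) = bot (norm x) ∧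
    y.toWord.take (bot (norm x) - r) = x.toWord.take (bot (norm x) - r)}

section prefixPiece

variable {S : Set ℕ} {bot : ℕ → ℕ} {w r : ℕ}

theorem mem_prefixPiece_self {x : FreeGroup α} (hx : norm x ∈ S) : x ∈ prefixPiece S bot r x :=
  ⟨hx, rfl, rfl⟩

theorem norm_inv_mul_le_of_mem_prefixPiece {r' : ℕ} (h : IsBandPartition S bot w r')
    {x u v : FreeGroup α} (hu : u ∈ prefixPiece S bot r x) (hv : v ∈ prefixPiece S bot r x) :
    norm (u⁻¹ * v) ≤ 2 * (w + r) := by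
  obtain ⟨huS, hub, hut⟩ := hu
  obtain ⟨hvS, hvb, hvt⟩ := hv
  have := norm_inv_mul_le_of_take_eq (hut.trans hvt.symm)
  have := h.lt_bot_add _ huS
  have := h.lt_bot_add _ hvS
  omega

theorem le_norm_inv_mul_of_mem_prefixPiece (h : IsBandPartition S bot w r)
    {x y u v : FreeGroup α} (hne : prefixPiece S bot r x ≠ prefixPiece S bot r y)
    (hu : u ∈ prefixPiece S bot r x) (hv : v ∈ prefixPiece S bot r y) :
    r ≤ norm (u⁻¹ * v) := by
  obtain ⟨huS, hub, hut⟩ := hu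
  obtain ⟨hvS, hvb, hvt⟩ := hv
  by_cases hbot : bot (norm u) = bot (norm v)
  · have hxy : bot (norm x) = bot (norm y) := hub.symm.trans (hbot.trans hvb)
    have htake : u.toWord.take (bot (norm x) - r) ≠ v.toWord.take (bot (norm x) - r) := by
      rw [hut, hxy, hvt]
      refine fun heq => hne ?_
      unfold prefixPiece
      rw [hxy, heq]
    have hr : r ≤ bot (norm x) := by
      by_contra hlt
      rw [Nat.sub_eq_zero_of_le (by omega), List.take_zero, List.take_zero] at htake
      exact htake rfl
    have := le_norm_inv_mul_of_take_ne htake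
    have := h.bot_le _ huS
    have := h.bot_le _ hvS
    omega
  · have := norm_le_norm_add_norm_inv_mul u v
    have := norm_le_norm_add_norm_inv_mul v u
    rw [norm_inv_mul_comm] at this
    have := h.separated _ huS _ hvS hbot
    omega

variable [MetricSpace (FreeGroup α)] (hdist : ∀ x y : FreeGroup α, dist x y = norm (x⁻¹ * y))
include hdist

theorem unifBounded_of_subset_range_prefixPiece {r' : ℕ} (h : IsBandPartition S bot w r')
    {𝒰 : Set (Set (FreeGroup α))} (h𝒰 : 𝒰 ⊆ range (prefixPiece S bot r)) : UnifBounded 𝒰 := by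
  refine ⟨2 * (w + r) + 1, by positivity, ?_⟩
  intro U hU u hu v hv
  obtain ⟨x, rfl⟩ := h𝒰 hU
  rw [hdist]
  exact_mod_cast (norm_inv_mul_le_of_mem_prefixPiece h hu hv).trans (Nat.le_succ _)

theorem rDisjoint_of_subset_range_prefixPiece (h : IsBandPartition S bot w r)
    {𝒰 : Set (Set (FreeGroup α))} (h𝒰 : 𝒰 ⊆ range (prefixPiece S bot r)) :
    RDisjoint r 𝒰 := by
  intro U hU V hV hne u hu v hv
  obtain ⟨x, rfl⟩ := h𝒰 hU
  obtain ⟨y, rfl⟩ := h𝒰 hV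
  rw [hdist]
  exact_mod_cast le_norm_inv_mul_of_mem_prefixPiece h hne hu hv

end prefixPiece

section Construction

def slabFamily (b H t : ℕ) : Set (Set (FreeGroup α)) :=
  prefixPiece {n | n / b % 2 = 1} (fun n => n / b * b) b '' {x | norm x / b % (2 * H) = 2 * t - 1}

def slabComplFamily (a b H t : ℕ) : Set (Set (FreeGroup α)) :=
  range (prefixPiece {n | n / b % (2 * H) ≠ 2 * t - 1}
    (fun n => runStart (2 * H) (2 * t - 1) (n / b) * b) a)

variable {a b H t : ℕ}

theorem isBandPartition_oddBlocks (hb : 0 < b) :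
    IsBandPartition {n | n / b % 2 = 1} (fun n => n / b * b) b b := by
  have := isBandPartition_odd.scale (r := 1) hb
  rwa [one_mul] at this

theorem isBandPartition_slabCompl (hb : 0 < b) (ht : 0 < t) (htH : t ≤ H) :
    IsBandPartition {n | n / b % (2 * H) ≠ 2 * t - 1}
      (fun n => runStart (2 * H) (2 * t - 1) (n / b) * b) ((2 * H - 1) * b) b := by
  have := (isBandPartition_mod_ne (M := 2 * H) (c := 2 * t - 1) (by omega)).scale (r := 1) hb
  rwa [one_mul] at this

theorem sUnion_slabFamily_subset (hb : 0 < b) :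
    ⋃₀ slabFamily (α := α) b H t ⊆ {y | norm y / b % (2 * H) = 2 * t - 1} := by
  rintro y ⟨_, ⟨x, hx, rfl⟩, -, hyx, -⟩
  rwa [mem_ofPred, Nat.eq_of_mul_eq_mul_right hb hyx]

theorem disjoint_sUnion_slabFamily {t' : ℕ} (hb : 0 < b) (ht : 0 < t) (ht' : 0 < t')
    (hne : t ≠ t') : Disjoint (⋃₀ slabFamily (α := α) b H t) (⋃₀ slabFamily b H t') := by
  refine disjoint_of_subset (sUnion_slabFamily_subset hb) (sUnion_slabFamily_subset hb) ?_
  exact disjoint_left.2 fun y (hy : _ = _) (hy' : _ = _) => hne (by omega)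

theorem sUnion_slabFamily_nonempty [Nonempty α] (hb : 0 < b) (ht : 0 < t) (htH : t ≤ H) :
    (⋃₀ slabFamily (α := α) b H t).Nonempty := by
  obtain ⟨x, hx⟩ := norm_surjective (α := α) ((2 * t - 1) * b)
  have hq : norm x / b = 2 * t - 1 := by rw [hx, Nat.mul_div_cancel _ hb]
  refine ⟨x, _, ⟨x, ?_, rfl⟩, mem_prefixPiece_self ?_⟩
  · rw [mem_ofPred, hq, Nat.mod_eq_of_lt (by omega)]
  · rw [mem_ofPred, hq]
    omega

theorem sUnion_slabComplFamily_union_sUnion_slabFamily (ht : 0 < t) :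
    ⋃₀ slabComplFamily (α := α) a b H t ∪ ⋃₀ slabFamily b H t = univ := by
  refine eq_univ_of_forall fun x => ?_
  by_cases hx : norm x / b % (2 * H) = 2 * t - 1
  · refine .inr ⟨_, ⟨x, hx, rfl⟩, mem_prefixPiece_self ?_⟩
    rw [mem_ofPred, ← Nat.mod_mod_of_dvd _ (dvd_mul_right 2 H), hx]
    omega
  · exact .inl ⟨_, ⟨x, rfl⟩, mem_prefixPiece_self hx⟩

end Construction

end FreeGroup

open FreeGroup

/-- The free group on two generators, with the word metric of a free
basis, has the `(1,0)`-DTUT property. -/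
theorem freeGroup_dtut [MetricSpace (FreeGroup (Fin 2))]
    (hword : ∀ x y : FreeGroup (Fin 2),
      dist x y = (wordLength (Set.range (FreeGroup.of : Fin 2 → FreeGroup (Fin 2)))
        (x⁻¹ * y) : ℝ)) :
    DTUT (FreeGroup (Fin 2)) 1 0 := by
  have hdist : ∀ x y : FreeGroup (Fin 2), dist x y = norm (x⁻¹ * y) := fun x y => by
    rw [hword, wordLength_range_of]
  refine ⟨fun _ => 0, fun h k hk => ?_⟩
  have hab : (k 0 : ℕ) < k 1 := hk Fin.zero_lt_one
  have hb : 0 < (k 1 : ℕ) := (k 1).pos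
  have hslab := fun 𝒰 => rDisjoint_of_subset_range_prefixPiece (𝒰 := 𝒰) hdist
    (isBandPartition_oddBlocks hb)
  refine ⟨fun l _ => slabComplFamily (k 0) (k 1) (h (k 1)) (l 0),
    fun l _ _ => slabFamily (k 1) (h (k 1)) (l 0), fun l hl => ⟨⟨fun _ => ?_, fun _ _ => ?_,
      fun _ => ?_, fun i _ => ?_, ?_⟩, fun i _ => ?_⟩⟩
  · exact unifBounded_of_subset_range_prefixPiece hdist
      (isBandPartition_slabCompl hb (l 0).pos (hl 0)) subset_rfl
  · exact unifBounded_of_subset_range_prefixPiece hdist (isBandPartition_oddBlocks hb)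
      (image_subset_range _ _)
  · exact rDisjoint_of_subset_range_prefixPiece hdist
      ((isBandPartition_slabCompl hb (l 0).pos (hl 0)).mono hab.le) subset_rfl
  · obtain rfl := Fin.fin_one_eq_zero i
    exact hslab _ (image_subset_range _ _)
  · simpa only [iUnion_const] using sUnion_slabComplFamily_union_sUnion_slabFamily (l 0).pos
  · obtain rfl := Fin.fin_one_eq_zero i
    simp only [update_self]
    exact ⟨fun t ht => sUnion_slabFamily_nonempty hb t.pos ht,
      fun t t' _ _ hne => disjoint_sUnion_slabFamily hb t.pos t'.pos (PNat.coe_injective.ne hne),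
      hslab _ (iUnion₂_subset fun _ _ => image_subset_range _ _)⟩
end

section
/- Let X be a metric space with asdim(X) = ∞ and let k ∈ ℕ. Then trasdim(X) ≤ ω + k if and only if for every n ∈ ℕ there exists m(n) ∈ ℕ such that for every d > 0 there are uniformly bounded families 𝒰_{−k}, 𝒰_{−k+1}, …, 𝒰_{m(n)} of subsets of X with 𝒰_i n-disjoint for −k ≤ i ≤ 0, 𝒰_j d-disjoint for 1 ≤ j ≤ m(n), and ⋃_{i=−k}^{m(n)} 𝒰_i covering X, where moreover m(n) → ∞ as n → ∞. -/
open Metric Set Function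

open APC Set

/-! Unwinding Radul's ordinal: `Ord M ≤ b` for finite `b` says that the members of `M` have at
most `b` elements, so `Ord M ≤ ω + k` says that for each `σ` with `k + 1` elements the members of
`M^σ` have bounded size. For `M = A(X)`, a set `τ ∈ M^σ` with more than `p` elements is ruled out
exactly when `X` is covered by `k + 1` families with disjointness constants from `σ` together with
`p` families with the larger constants from `τ`. Taking `σ = {n, …, n + k}` and `τ` far out turns
the size bound into covers, and conversely covers for `n = max σ` bound `|τ|`. The growth of `m`
costs nothing, since `m n` may always be enlarged by adding empty families. -/

namespace APC

section Ord

variable {M : Set (Finset ℕ)}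

theorem ordLE_iff {α : Ordinal.{0}} :
    OrdLE α M ↔ M = ∅ ∨ ∀ a, ∃ β < α, OrdLE β (deriv M a) := by
  rw [OrdLE, WellFounded.fix_eq]
  simp only [exists_prop]

theorem ordLE_empty (α : Ordinal.{0}) : OrdLE α ∅ :=
  ordLE_iff.2 (Or.inl rfl)

theorem OrdLE.mono {α β : Ordinal.{0}} (hαβ : α ≤ β) (h : OrdLE α M) : OrdLE β M := by
  refine ordLE_iff.2 ((ordLE_iff.1 h).imp_right fun h a => ?_)
  obtain ⟨γ, hγ, hM⟩ := h a
  exact ⟨γ, hγ.trans_le hαβ, hM⟩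

theorem deriv_empty (a : ℕ) : deriv ∅ a = ∅ := by
  ext τ
  simp [deriv]

theorem ordLE_zero_iff : OrdLE 0 M ↔ M = ∅ := by
  simp [ordLE_iff (α := 0)]

theorem ordLE_succ_iff {α : Ordinal.{0}} :
    OrdLE (Order.succ α) M ↔ ∀ a, OrdLE α (deriv M a) := by
  rw [ordLE_iff]
  constructor
  · rintro (rfl | h) a
    · rw [deriv_empty]
      exact ordLE_empty α
    · obtain ⟨β, hβ, hM⟩ := h a
      exact hM.mono (Order.lt_succ_iff.1 hβ)
  · exact fun h => Or.inr fun a => ⟨α, Order.lt_succ α, h a⟩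

theorem ordLE_natCast_iff (hM : ∀ σ ∈ M, σ.Nonempty) (b : ℕ) :
    OrdLE b M ↔ ∀ σ ∈ M, σ.card ≤ b := by
  induction b generalizing M with
  | zero =>
    rw [Nat.cast_zero, ordLE_zero_iff, eq_empty_iff_forall_notMem]
    exact ⟨fun h σ hσ => absurd hσ (h σ),
      fun h σ hσ => (hM σ hσ).card_pos.ne' (Nat.le_zero.1 (h σ hσ))⟩
  | succ b ih =>
    rw [Nat.cast_succ, ← Order.succ_eq_add_one, ordLE_succ_iff,
      forall_congr' fun a => ih (M := deriv M a) fun _ hτ => hτ.1]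
    constructor
    · intro h σ hσ
      obtain ⟨a, ha⟩ := hM σ hσ
      have hcard := Finset.card_erase_of_mem ha
      obtain he | hne := (σ.erase a).eq_empty_or_nonempty
      · rw [he, Finset.card_empty] at hcard
        omega
      · have := h a (σ.erase a) ⟨hne, Finset.notMem_erase a σ, by rwa [Finset.insert_erase ha]⟩
        omega
    · intro h a τ hτ
      have := h _ hτ.2.2
      rw [Finset.card_insert_of_notMem hτ.2.1] at this
      omega

theorem ordLE_omega0_iff :
    OrdLE Ordinal.omega0 M ↔ ∀ a, BddAbove (Finset.card '' deriv M a) := by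
  rw [ordLE_iff]
  constructor
  · rintro (rfl | h) a
    · simp [deriv_empty]
    · obtain ⟨β, hβ, hM⟩ := h a
      obtain ⟨b, rfl⟩ := Ordinal.lt_omega0.1 hβ
      exact ⟨b, forall_mem_image.2 ((ordLE_natCast_iff (fun _ hτ => hτ.1) b).1 hM)⟩
  · refine fun h => Or.inr fun a => ?_
    obtain ⟨b, hb⟩ := h a
    exact ⟨b, Ordinal.natCast_lt_omega0 b,
      (ordLE_natCast_iff (fun _ hτ => hτ.1) b).2 (forall_mem_image.1 hb)⟩

/-- The family `M^σ` of the paper. -/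
def derivSet (M : Set (Finset ℕ)) (σ : Finset ℕ) : Set (Finset ℕ) :=
  {τ | τ.Nonempty ∧ Disjoint τ σ ∧ τ ∪ σ ∈ M}

theorem derivSet_singleton (a : ℕ) : derivSet M {a} = deriv M a := by
  ext τ
  simp only [derivSet, deriv, mem_ofPred_eq, Finset.disjoint_singleton_right, Finset.union_comm τ,
    ← Finset.insert_eq]

theorem derivSet_deriv_of_notMem {a : ℕ} {σ : Finset ℕ} (ha : a ∉ σ) :
    derivSet (deriv M a) σ = derivSet M (insert a σ) := by
  ext τ
  simp only [derivSet, deriv, mem_ofPred_eq, Finset.disjoint_insert_right, Finset.union_insert,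
    Finset.mem_union, not_or, Finset.union_nonempty]
  tauto

theorem derivSet_deriv_of_mem {a : ℕ} {σ : Finset ℕ} (ha : a ∈ σ) :
    derivSet (deriv M a) σ = ∅ :=
  eq_empty_iff_forall_notMem.2 fun _ hτ => hτ.2.2.2.1 (Finset.mem_union_right _ ha)

theorem ordLE_omega0_add_natCast_iff (k : ℕ) :
    OrdLE (Ordinal.omega0 + k) M ↔
      ∀ σ : Finset ℕ, σ.card = k + 1 → BddAbove (Finset.card '' derivSet M σ) := by
  induction k generalizing M with
  | zero =>
    simp only [Nat.cast_zero, add_zero, zero_add, Finset.card_eq_one, ordLE_omega0_iff]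
    constructor
    · rintro h _ ⟨a, rfl⟩
      rw [derivSet_singleton]
      exact h a
    · intro h a
      simpa [derivSet_singleton] using h {a} ⟨a, rfl⟩
  | succ k ih =>
    rw [Nat.cast_succ, ← add_assoc, ← Order.succ_eq_add_one, ordLE_succ_iff]
    simp only [ih]
    constructor
    · intro h σ hσ
      obtain ⟨a, ha⟩ := Finset.card_pos.1 (show 0 < σ.card by omega)
      have := h a (σ.erase a) (by rw [Finset.card_erase_of_mem ha, hσ, Nat.add_sub_cancel])
      rwa [derivSet_deriv_of_notMem (Finset.notMem_erase a σ), Finset.insert_erase ha] at this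
    · intro h a σ hσ
      by_cases ha : a ∈ σ
      · simp [derivSet_deriv_of_mem ha]
      · rw [derivSet_deriv_of_notMem ha]
        exact h _ (by rw [Finset.card_insert_of_notMem ha, hσ])

end Ord

section Covers

variable {X : Type*} [MetricSpace X]

theorem unifBounded_empty : UnifBounded (∅ : Set (Set X)) :=
  ⟨1, one_pos, fun _ hU => hU.elim⟩

theorem rDisjoint_empty (r : ℝ) : RDisjoint r (∅ : Set (Set X)) :=
  fun _ hU => hU.elim

theorem RDisjoint.mono {r s : ℝ} {𝒰 : Set (Set X)} (h : RDisjoint s 𝒰) (hrs : r ≤ s) :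
    RDisjoint r 𝒰 :=
  fun U hU V hV hUV x hx y hy => hrs.trans (h U hU V hV hUV x hx y hy)

variable (X) in
def CoverableBy (σ : Finset ℕ) : Prop :=
  ∃ 𝒰 : ℕ → Set (Set X),
    (∀ i ∈ σ, UnifBounded (𝒰 i)) ∧ (∀ i ∈ σ, RDisjoint (i : ℝ) (𝒰 i)) ∧
      (⋃ i ∈ σ, ⋃₀ 𝒰 i) = univ

theorem CoverableBy.exists_cover {σ : Finset ℕ} (h : CoverableBy X σ) {ι : Type*} (e : ι → ℕ)
    (he : ↑σ ⊆ range e) :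
    ∃ 𝒰 : ι → Set (Set X), (∀ i, UnifBounded (𝒰 i)) ∧ (∀ i, RDisjoint (e i : ℝ) (𝒰 i)) ∧
      (⋃ i, ⋃₀ 𝒰 i) = univ := by
  classical
  obtain ⟨𝒲, hbdd, hdisj, hcov⟩ := h
  refine ⟨fun i => if e i ∈ σ then 𝒲 (e i) else ∅, fun i => ?_, fun i => ?_, ?_⟩
  · dsimp only
    split_ifs with hi
    exacts [hbdd _ hi, unifBounded_empty]
  · dsimp only
    split_ifs with hi
    exacts [hdisj _ hi, rDisjoint_empty _]
  · refine eq_univ_of_univ_subset fun x _ => ?_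
    obtain ⟨j, hj, hx⟩ := mem_iUnion₂.1 (hcov ▸ mem_univ x :)
    obtain ⟨i, rfl⟩ := he hj
    exact mem_iUnion.2 ⟨i, by dsimp only; rwa [if_pos hj]⟩

theorem coverableBy_of_injective {σ : Finset ℕ} {ι : Type*} {e : ι → ℕ} (he : Injective e)
    (heσ : range e ⊆ σ) (𝒰 : ι → Set (Set X)) (hbdd : ∀ i, UnifBounded (𝒰 i))
    (hdisj : ∀ i, RDisjoint (e i : ℝ) (𝒰 i)) (hcov : (⋃ i, ⋃₀ 𝒰 i) = univ) :
    CoverableBy X σ := by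
  classical
  refine ⟨extend e 𝒰 fun _ => ∅, fun n _ => ?_, fun n _ => ?_, ?_⟩
  · by_cases hn : ∃ i, e i = n
    · obtain ⟨i, rfl⟩ := hn
      rw [he.extend_apply]
      exact hbdd i
    · rw [extend_apply' _ _ _ hn]
      exact unifBounded_empty
  · by_cases hn : ∃ i, e i = n
    · obtain ⟨i, rfl⟩ := hn
      rw [he.extend_apply]
      exact hdisj i
    · rw [extend_apply' _ _ _ hn]
      exact rDisjoint_empty _
  · refine eq_univ_of_univ_subset fun x _ => ?_
    obtain ⟨i, hx⟩ := mem_iUnion.1 (hcov ▸ mem_univ x)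
    exact mem_biUnion (heσ (mem_range_self i)) (by rwa [he.extend_apply])

variable (X) in
def HasSplitCover (k p : ℕ) (r d : ℝ) : Prop :=
  ∃ (𝒰 : Fin (k + 1) → Set (Set X)) (𝒱 : Fin p → Set (Set X)),
    (∀ i, UnifBounded (𝒰 i)) ∧ (∀ j, UnifBounded (𝒱 j)) ∧
    (∀ i, RDisjoint r (𝒰 i)) ∧ (∀ j, RDisjoint d (𝒱 j)) ∧
    ((⋃ i, ⋃₀ 𝒰 i) ∪ (⋃ j, ⋃₀ 𝒱 j)) = univ

theorem hasSplitCover_of_mem_upperBounds {k n B p : ℕ}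
    (hB : B ∈ upperBounds (Finset.card '' derivSet (AClass X) (Finset.Ico n (n + k + 1))))
    (hBp : B < p) (d : ℝ) : HasSplitCover X k p n d := by
  set σ := Finset.Ico n (n + k + 1)
  set D := max (n + k + 1) ⌈d⌉₊
  set τ := Finset.Ico D (D + p)
  have hτ : τ.Nonempty := Finset.nonempty_Ico.2 (by omega)
  have hcov : CoverableBy X (τ ∪ σ) := by
    by_contra hnc
    have hmem : τ ∈ derivSet (AClass X) σ :=
      ⟨hτ, Finset.disjoint_left.2 fun x hxτ hxσ => by
        simp only [τ, σ, Finset.mem_Ico] at hxτ hxσ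
        omega, hτ.mono Finset.subset_union_left, hnc⟩
    have := hB (mem_image_of_mem _ hmem)
    simp only [τ, Nat.card_Ico] at this
    omega
  obtain ⟨𝒲, hbdd, hdisj, hcov⟩ := hcov.exists_cover
    (Sum.elim (fun i : Fin (k + 1) => n + i) (fun j : Fin p => D + j)) (by
      intro x hx
      rw [Set.Sum.elim_range]
      rcases Finset.mem_union.1 hx with hx | hx <;>
        simp only [τ, σ, Finset.mem_Ico] at hx
      · exact Or.inr ⟨⟨x - D, by omega⟩, by simp only; omega⟩
      · exact Or.inl ⟨⟨x - n, by omega⟩, by simp only; omega⟩)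
  refine ⟨fun i => 𝒲 (.inl i), fun j => 𝒲 (.inr j), fun i => hbdd _, fun j => hbdd _,
    fun i => (hdisj _).mono ?_, fun j => (hdisj _).mono ?_, by rw [← hcov, iUnion_sum]⟩
  · simp
  · calc d ≤ ⌈d⌉₊ := Nat.le_ceil d
      _ ≤ ((D + j : ℕ) : ℝ) := by exact_mod_cast (le_max_right _ _).trans (Nat.le_add_right _ _)

theorem card_le_of_hasSplitCover {k p : ℕ} {σ τ : Finset ℕ} (hσ : σ.card = k + 1)
    (hτ : τ ∈ derivSet (AClass X) σ)
    (h : ∀ d : ℝ, 0 < d → HasSplitCover X k p (σ.sup id : ℕ) d) : τ.card ≤ p := by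
  obtain ⟨-, hτσ, -, hnc⟩ := hτ
  by_contra! hp
  obtain ⟨τ', hτ'τ, hτ'⟩ := Finset.exists_subset_card_eq hp.le
  obtain ⟨𝒰, 𝒱, h𝒰, h𝒱, h𝒰d, h𝒱d, hcov⟩ := h ((τ.sup id : ℕ) + 1) (by positivity)
  have hinj : Injective (Sum.elim (σ.orderEmbOfFin hσ) (τ'.orderEmbOfFin hτ')) :=
    (σ.orderEmbOfFin hσ).injective.sumElim (τ'.orderEmbOfFin hτ').injective fun a b hab =>
      Finset.disjoint_left.1 hτσ (hτ'τ (τ'.orderEmbOfFin_mem hτ' b))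
        (hab ▸ σ.orderEmbOfFin_mem hσ a)
  refine hnc (coverableBy_of_injective hinj ?_ (Sum.elim 𝒰 𝒱) (Sum.forall.2 ⟨h𝒰, h𝒱⟩)
    (Sum.forall.2 ⟨fun i => (h𝒰d i).mono ?_, fun j => (h𝒱d j).mono ?_⟩) (by rwa [iUnion_sum]))
  · rw [Set.Sum.elim_range, Finset.range_orderEmbOfFin, Finset.range_orderEmbOfFin,
      Finset.coe_union, union_comm]
    exact union_subset_union_left _ (Finset.coe_subset.2 hτ'τ)
  · exact_mod_cast Finset.le_sup (f := id) (σ.orderEmbOfFin_mem hσ i)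
  · have := Finset.le_sup (f := id) (hτ'τ (τ'.orderEmbOfFin_mem hτ' j))
    simp only [Sum.elim_inr, id] at this ⊢
    exact_mod_cast this.trans (Nat.le_succ _)

end Covers

end APC

theorem trasdim_le_omega_add_iff_general {X : Type*} [MetricSpace X] (k : ℕ) :
    TrasdimLE X (Ordinal.omega0 + (k : Ordinal.{0})) ↔
      ∃ m : ℕ → ℕ, Filter.Tendsto m Filter.atTop Filter.atTop ∧
        ∀ n : ℕ, ∀ d : ℝ, 0 < d →
          ∃ (𝒰 : Fin (k + 1) → Set (Set X)) (𝒱 : Fin (m n) → Set (Set X)),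
            (∀ i, UnifBounded (𝒰 i)) ∧ (∀ j, UnifBounded (𝒱 j)) ∧
            (∀ i, RDisjoint (n : ℝ) (𝒰 i)) ∧ (∀ j, RDisjoint d (𝒱 j)) ∧
            ((⋃ i, ⋃₀ 𝒰 i) ∪ (⋃ j, ⋃₀ 𝒱 j)) = Set.univ := by
  rw [TrasdimLE, ordLE_omega0_add_natCast_iff]
  constructor
  · intro h
    choose B hB using fun n => h (Finset.Ico n (n + k + 1)) (by rw [Nat.card_Ico]; omega)
    refine ⟨fun n => n + B n + 1,
      Filter.tendsto_atTop_mono (fun n => show n ≤ _ by omega) Filter.tendsto_id,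
      fun n d _ => hasSplitCover_of_mem_upperBounds (hB n) (by dsimp only; omega) d⟩
  · rintro ⟨m, -, hm⟩ σ hσ
    exact ⟨m (σ.sup id), forall_mem_image.2 fun τ hτ =>
      card_le_of_hasSplitCover hσ hτ (hm (σ.sup id))⟩

/-- For a metric space `X` with infinite asymptotic dimension and `k ∈ ℕ`,
`trasdim(X) ≤ ω + k` iff for every `n` there is `m(n)` (with `m(n) → ∞` as `n → ∞`) such
that for every `d > 0` there are uniformly bounded families `𝒰₋ₖ, …, 𝒰₀` (each `n`-disjoint)
and `𝒰₁, …, 𝒰_{m(n)}` (each `d`-disjoint) which together cover `X`. -/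
theorem trasdim_le_omega_add_iff {X : Type*} [MetricSpace X]
    (hinf : ∀ n : ℕ, ¬ AsdimLE X n) (k : ℕ) :
    TrasdimLE X (Ordinal.omega0 + (k : Ordinal.{0})) ↔
      ∃ m : ℕ → ℕ, Filter.Tendsto m Filter.atTop Filter.atTop ∧
        ∀ n : ℕ, ∀ d : ℝ, 0 < d →
          ∃ (𝒰 : Fin (k + 1) → Set (Set X)) (𝒱 : Fin (m n) → Set (Set X)),
            (∀ i, UnifBounded (𝒰 i)) ∧ (∀ j, UnifBounded (𝒱 j)) ∧
            (∀ i, RDisjoint (n : ℝ) (𝒰 i)) ∧ (∀ j, RDisjoint d (𝒱 j)) ∧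
            ((⋃ i, ⋃₀ 𝒰 i) ∪ (⋃ j, ⋃₀ 𝒱 j)) = Set.univ :=
  trasdim_le_omega_add_iff_general k
end
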